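/- arXiv:1705.00208 — 4 statements merged into one kernel-verified Lean document; each statement's English description precedes it below -/
import Mathlib

section
/- Let I be a closed unbounded set of ordinals and let B ⊆ I be a suitable set. If β ∈ B and β' is the successor of β in B (that is, β' = min(B ∖ (β+1)), assumed to exist), then either β' is the least element of I above β (β' = min(I ∖ (β+1))), or else β' is a limit point of I of uncountable cofinality. -/
open Set

noncomputable section

/-- `l` is a limit point of the set `S` of ordinals: `l > 0` and `sup (S ∩ l) = l`. -/
def IsLimitPoint (S : Set Ordinal) (l : Ordinal) : Prop :=
  0 < l ∧ sSup (S ∩ Iio l) = l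

/-- A set of ordinals is closed if it contains all of its limit points. -/
def IsClosedSet (S : Set Ordinal) : Prop :=
  ∀ l, IsLimitPoint S l → l ∈ S

/-- A set of ordinals is unbounded (in the class of all ordinals). -/
def IsUnboundedSet (S : Set Ordinal) : Prop :=
  ∀ a, ∃ b ∈ S, a < b

/-- `B` is a suitable subset of `I`: it is a countable closed subset of `I`, every member of `B`
which is a limit point of `I` of countable cofinality is a limit point of `B`, and `B` is closed
under immediate predecessors in `I`. -/
def Suitable (I B : Set Ordinal) : Prop :=
  B ⊆ I ∧ B.Countable ∧ IsClosedSet B ∧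
  (∀ β ∈ B, IsLimitPoint I β → β.cof ≤ Cardinal.aleph0 → IsLimitPoint B β) ∧
  (∀ β ∈ B, ∀ m, IsGreatest (I ∩ Iio β) m → m ∈ B)

/-! Let `β'` be the successor of `β` in `B`. If `I` has an element strictly between them, then
`I ∩ β'` has no largest element `γ`: closure of `B` under predecessors would put `γ` into `B`
strictly between `β` and `β'`. As `I` is closed, `β'` is then a limit point of `I`. It is not a
limit point of `B`, since `B ∩ β' ⊆ β + 1`, so suitability forces its cofinality to be
uncountable. -/

namespace IsClosedSet

variable {I : Set Ordinal}

theorem csSup_mem (hI : IsClosedSet I) {T : Set Ordinal} (hTI : T ⊆ I) (hT : T.Nonempty)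
    (hTbdd : BddAbove T) : sSup T ∈ I := by
  by_cases hmem : sSup T ∈ T
  · exact hTI hmem
  have hlt : ∀ x ∈ T, x < sSup T := fun x hx =>
    (le_csSup hTbdd hx).lt_of_ne fun h => hmem (h ▸ hx)
  obtain ⟨x, hx⟩ := hT
  refine hI _ ⟨(hlt x hx).pos, le_antisymm (csSup_le' fun y hy => hy.2.le) ?_⟩
  exact csSup_le_csSup ⟨sSup T, fun y hy => hy.2.le⟩ ⟨x, hx⟩ fun y hy => ⟨hTI hy, hlt y hy⟩

theorem isLimitPoint_or_isGreatest (hI : IsClosedSet I) {l : Ordinal}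
    (hne : (I ∩ Iio l).Nonempty) :
    IsLimitPoint I l ∨ IsGreatest (I ∩ Iio l) (sSup (I ∩ Iio l)) := by
  have hbdd : BddAbove (I ∩ Iio l) := ⟨l, fun x hx => hx.2.le⟩
  rcases (csSup_le' fun x (hx : x ∈ I ∩ Iio l) => hx.2.le).eq_or_lt with heq | hlt
  · obtain ⟨x, hx⟩ := hne
    exact .inl ⟨(zero_le (a := x)).trans_lt hx.2, heq⟩
  · exact .inr ⟨⟨hI.csSup_mem inter_subset_left hne hbdd, hlt⟩, fun x hx => le_csSup hbdd hx⟩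

end IsClosedSet

theorem IsLeast.not_isLimitPoint {B : Set Ordinal} {β β' : Ordinal}
    (h : IsLeast (B ∩ Ioi β) β') : ¬IsLimitPoint B β' := by
  rintro ⟨-, hsup⟩
  have hle : sSup (B ∩ Iio β') ≤ β :=
    csSup_le' fun x hx => not_lt.1 fun hβx => (h.2 ⟨hx.1, hβx⟩).not_gt hx.2
  exact h.1.2.not_ge (hsup ▸ hle)

theorem isLimitPoint_of_isLeast_inter_Ioi {I B : Set Ordinal} (hI : IsClosedSet I)
    (hpred : ∀ γ ∈ B, ∀ m, IsGreatest (I ∩ Iio γ) m → m ∈ B) {β β' m : Ordinal}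
    (hβ' : IsLeast (B ∩ Ioi β) β') (hm : m ∈ I) (hβm : β < m) (hmβ' : m < β') :
    IsLimitPoint I β' := by
  refine (hI.isLimitPoint_or_isGreatest ⟨m, hm, hmβ'⟩).resolve_right fun hgr => ?_
  have hγβ : β < sSup (I ∩ Iio β') := hβm.trans_le (hgr.2 ⟨hm, hmβ'⟩)
  exact (hβ'.2 ⟨hpred β' hβ'.1.1 _ hgr, hγβ⟩).not_gt hgr.1.2

theorem stmt0_general (I B : Set Ordinal) (hIcl : IsClosedSet I)
    (hB : Suitable I B) (β β' : Ordinal)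
    (hβ' : IsLeast (B ∩ Ioi β) β') :
    IsLeast (I ∩ Ioi β) β' ∨ (IsLimitPoint I β' ∧ Cardinal.aleph0 < β'.cof) := by
  obtain ⟨hBI, -, -, hlimB, hpred⟩ := hB
  have hmin := isLeast_csInf (⟨β', hBI hβ'.1.1, hβ'.1.2⟩ : (I ∩ Ioi β).Nonempty)
  rcases (hmin.2 ⟨hBI hβ'.1.1, hβ'.1.2⟩).eq_or_lt with heq | hlt
  · exact .inl (heq ▸ hmin)
  have hlim := isLimitPoint_of_isLeast_inter_Ioi hIcl hpred hβ' hmin.1.1 hmin.1.2 hlt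
  exact .inr ⟨hlim, lt_of_not_ge fun hcof => hβ'.not_isLimitPoint (hlimB β' hβ'.1.1 hlim hcof)⟩

/-- If `B ⊆ I` is suitable and `β'` is the successor of `β` in `B`, then either `β'` is the
least element of `I` above `β`, or `β'` is a limit point of `I` of uncountable cofinality. -/
theorem stmt0 (I B : Set Ordinal) (hIcl : IsClosedSet I) (hIunb : IsUnboundedSet I)
    (hB : Suitable I B) (β β' : Ordinal) (hβ : β ∈ B)
    (hβ' : IsLeast (B ∩ Ioi β) β') :
    IsLeast (I ∩ Ioi β) β' ∨ (IsLimitPoint I β' ∧ Cardinal.aleph0 < β'.cof) :=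
  stmt0_general I B hIcl hB β β' hβ'
end
end

section
/- Let I be a closed unbounded set of ordinals and let B₀ and B₁ be equivalent suitable subsets of I, with σ : B₀ → B₁ the order isomorphism witnessing the equivalence. Then σ preserves I-successor steps: for all β, β' ∈ B₀ with β < β', one has β' = min(I ∖ (β+1)) if and only if σ(β') = min(I ∖ (σ(β)+1)). -/
open Set

noncomputable section

/-! The successor `β'` of `β` in `I` is characterised inside a suitable set `B` as the successor of
`β` in `B` that is not a limit point of `I`: an element of `I` strictly between them would force
`I ∩ β'` to have a maximum (since `I` is closed and `β'` is not a limit point), and that maximum lies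
in `B`. Both halves of this characterisation are preserved by the order isomorphism `σ`. -/

lemma not_isLimitPoint_of_isGreatest {S : Set Ordinal} {a b : Ordinal}
    (h : IsGreatest (S ∩ Iio b) a) : ¬ IsLimitPoint S b := by
  rintro ⟨-, hsup⟩
  rw [h.csSup_eq] at hsup
  exact h.1.2.ne hsup

lemma exists_isGreatest_of_not_isLimitPoint {I : Set Ordinal} {b : Ordinal} (hI : IsClosedSet I)
    (hne : (I ∩ Iio b).Nonempty) (hb : ¬ IsLimitPoint I b) : ∃ m, IsGreatest (I ∩ Iio b) m := by
  have hbdd : BddAbove (I ∩ Iio b) := ⟨b, fun x hx => hx.2.le⟩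
  set l := sSup (I ∩ Iio b)
  by_cases hl : l ∈ I ∩ Iio b
  · exact ⟨l, hl, fun x hx => le_csSup hbdd hx⟩
  have hlt : ∀ x ∈ I ∩ Iio b, x < l := fun x hx =>
    (le_csSup hbdd hx).lt_of_ne (by rintro rfl; exact hl hx)
  have hlb : l < b := by
    refine (csSup_le hne fun x hx => hx.2.le).lt_of_ne fun hlb => hb ⟨?_, hlb⟩
    exact pos_of_gt hne.some_mem.2
  -- `l` is then a limit point of `I` below `b`, so closedness puts it in `I ∩ Iio b`.
  have hIl : I ∩ Iio l = I ∩ Iio b := by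
    ext x
    exact ⟨fun hx => ⟨hx.1, hx.2.trans hlb⟩, fun hx => ⟨hx.1, hlt x hx⟩⟩
  have hlI : l ∈ I := hI l ⟨pos_of_gt (hlt _ hne.some_mem), by rw [hIl]⟩
  exact absurd ⟨hlI, hlb⟩ hl

lemma isLeast_inter_Ioi_iff {I B : Set Ordinal} (hI : IsClosedSet I) (hBI : B ⊆ I)
    (hpred : ∀ β ∈ B, ∀ m, IsGreatest (I ∩ Iio β) m → m ∈ B) {β β' : Ordinal} (hβ : β ∈ I)
    (hβ' : β' ∈ B) :
    IsLeast (I ∩ Ioi β) β' ↔ ¬ IsLimitPoint I β' ∧ IsLeast (B ∩ Ioi β) β' := by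
  constructor
  · intro h
    refine ⟨not_isLimitPoint_of_isGreatest (a := β) ⟨⟨hβ, h.1.2⟩, fun x hx => ?_⟩,
      ⟨hβ', h.1.2⟩, fun γ hγ => h.2 ⟨hBI hγ.1, hγ.2⟩⟩
    by_contra! hβx
    exact (h.2 ⟨hx.1, hβx⟩).not_gt hx.2
  · rintro ⟨hlim, hleast⟩
    refine ⟨⟨hBI hβ', hleast.1.2⟩, fun x hx => ?_⟩
    by_contra! hxβ'
    obtain ⟨m, hm⟩ := exists_isGreatest_of_not_isLimitPoint hI ⟨x, hx.1, hxβ'⟩ hlim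
    have hβm : β < m := hx.2.trans_le (hm.2 ⟨hx.1, hxβ'⟩)
    exact (hleast.2 ⟨hpred β' hβ' m hm, hβm⟩).not_gt hm.1.2

lemma StrictMonoOn.isLeast_inter_Ioi_iff {s t : Set Ordinal} {f : Ordinal → Ordinal}
    (hf : StrictMonoOn f s) (hbij : BijOn f s t) {a b : Ordinal} (ha : a ∈ s) (hb : b ∈ s) :
    IsLeast (s ∩ Ioi a) b ↔ IsLeast (t ∩ Ioi (f a)) (f b) := by
  constructor
  · rintro ⟨⟨-, hab⟩, hmin⟩
    refine ⟨⟨hbij.mapsTo hb, hf ha hb hab⟩, ?_⟩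
    rintro y ⟨hy, hay⟩
    obtain ⟨x, hx, rfl⟩ := hbij.surjOn hy
    exact (hf.le_iff_le hb hx).2 (hmin ⟨hx, (hf.lt_iff_lt ha hx).1 hay⟩)
  · rintro ⟨⟨-, hab⟩, hmin⟩
    refine ⟨⟨hb, (hf.lt_iff_lt ha hb).1 hab⟩, ?_⟩
    rintro x ⟨hx, hax⟩
    exact (hf.le_iff_le hb hx).1 (hmin ⟨hbij.mapsTo hx, hf ha hx hax⟩)

theorem stmt2_general (I B₀ B₁ : Set Ordinal) (hIcl : IsClosedSet I)
    (h₀ : Suitable I B₀) (h₁ : Suitable I B₁)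
    (σ : Ordinal → Ordinal) (hbij : Set.BijOn σ B₀ B₁) (hmono : StrictMonoOn σ B₀)
    (heqv : ∀ β ∈ B₀, (IsLimitPoint I β ↔ IsLimitPoint I (σ β)))
    (β β' : Ordinal) (hβ : β ∈ B₀) (hβ' : β' ∈ B₀) :
    IsLeast (I ∩ Ioi β) β' ↔ IsLeast (I ∩ Ioi (σ β)) (σ β') := by
  rw [isLeast_inter_Ioi_iff hIcl h₀.1 h₀.2.2.2.2 (h₀.1 hβ) hβ',
    isLeast_inter_Ioi_iff hIcl h₁.1 h₁.2.2.2.2 (h₁.1 (hbij.mapsTo hβ)) (hbij.mapsTo hβ'),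
    heqv β' hβ', hmono.isLeast_inter_Ioi_iff hbij hβ hβ']

/-- The order isomorphism between equivalent suitable sets preserves `I`-successor steps. -/
theorem stmt2 (I B₀ B₁ : Set Ordinal) (hIcl : IsClosedSet I) (hIunb : IsUnboundedSet I)
    (h₀ : Suitable I B₀) (h₁ : Suitable I B₁)
    (σ : Ordinal → Ordinal) (hbij : Set.BijOn σ B₀ B₁) (hmono : StrictMonoOn σ B₀)
    (heqv : ∀ β ∈ B₀, (IsLimitPoint I β ↔ IsLimitPoint I (σ β)))
    (β β' : Ordinal) (hβ : β ∈ B₀) (hβ' : β' ∈ B₀) (hlt : β < β') :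
    IsLeast (I ∩ Ioi β) β' ↔ IsLeast (I ∩ Ioi (σ β)) (σ β') :=
  stmt2_general I B₀ B₁ hIcl h₀ h₁ σ hbij hmono heqv β β' hβ hβ'
end
end

section
/- Let P be a set equipped with a preorder ≤ (reflexive and transitive) and an equivalence relation ≈, and assume the following transfer property (which the paper proves for its Prikry-type forcing and the Gitik equivalence relation): whenever s ≈ t and t' ≤ t, there exist s'' and t'' with s'' ≤ s, t'' ≤ t', and s'' ≈ t''. Let ⊑ be the transitive closure of the union of ≤ and ≈ (so x ⊑ y if and only if there is a finite chain x = x₀, x₁, …, x_n = y with each x_i ≤ x_{i+1} or x_i ≈ x_{i+1}); this relation induces the quotient ordering on the ≈-classes, defined as the smallest transitive relation with [s] ≤ [t] whenever s ≤ t or s ≈ t. Then for all s, t ∈ P with t ⊑ s, there exists q ∈ P with q ≤ s and q ⊑ t. -/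
/-- Abstract form of the paper's Proposition on the quotient ordering by the Gitik equivalence
relation: if `t ⊑ s` in the transitive closure of `≤ ∪ ≈`, then there is `q ≤ s` with `q ⊑ t`. -/
theorem stmt3 {P : Type*} (le eqv : P → P → Prop)
    (hrefl : ∀ p, le p p) (htrans : ∀ p q r, le p q → le q r → le p r)
    (heqv : Equivalence eqv)
    (htransfer : ∀ s t t', eqv s t → le t' t →
      ∃ s'' t'', le s'' s ∧ le t'' t' ∧ eqv s'' t'')
    (s t : P) (h : Relation.ReflTransGen (fun x y => le x y ∨ eqv x y) t s) :
    ∃ q, le q s ∧ Relation.ReflTransGen (fun x y => le x y ∨ eqv x y) q t := by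
  induction h with
  | refl => exact ⟨t, hrefl t, .refl⟩
  | tail hab hr ih =>
    obtain ⟨q, hq, hqt⟩ := ih
    rcases hr with hle | he
    · exact ⟨q, htrans _ _ _ hq hle, hqt⟩
    · obtain ⟨s'', t'', h1, h2, h3⟩ := htransfer _ _ q (heqv.symm he) hq
      exact ⟨s'', h1, .head (Or.inr h3) (.head (Or.inl h2) hqt)⟩
end

section
/- Let I be a closed unbounded set of ordinals with increasing enumeration ν ↦ κ_ν, and let B ⊆ I be a nonempty limit suitable set. Then sup B ∉ B (in particular, a nonempty limit suitable set is never closed); moreover sup B = κ_{ν+ω} for some ordinal ν, and sup B has cofinality ω. -/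
/-! A countable `B` is bounded, so `I \ B` is a single unbounded gap, and the gap clause of limit
suitability forces `B = I ∩ [0, κ_{ν+ω})`. Since `I` is closed, its enumeration `κ` is a normal
function, so `κ_{ν+ω}` is the supremum of `I` below it and has the cofinality `ω` of `ν + ω`. -/

open Set

noncomputable section

/-- `G` is a gap of `B` (relative to `I`): a maximal nonempty convex subset of `I \ B`. -/
def IsGap (I B G : Set Ordinal) : Prop :=
  G.Nonempty ∧ G ⊆ I \ B ∧
  (∀ x ∈ G, ∀ y ∈ G, ∀ z ∈ I \ B, x ≤ z → z ≤ y → z ∈ G) ∧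
  ∀ G', G ⊆ G' → G' ⊆ I \ B →
    (∀ x ∈ G', ∀ y ∈ G', ∀ z ∈ I \ B, x ≤ z → z ≤ y → z ∈ G') → G' = G

/-- The foot `λ` of a gap `G` of `B`: `sup({0} ∪ {β ∈ B : β < inf G})`. -/
def GapFoot (B G : Set Ordinal) : Ordinal :=
  sSup (insert 0 {β ∈ B | β < sInf G})

/-- `B` is a limit suitable subset of `I`. -/
def LimitSuitable (I B : Set Ordinal) : Prop :=
  Suitable I (B ∪ {l | IsLimitPoint B l}) ∧
  ∀ G, IsGap I B G →
    ((IsUnboundedSet G ∧ G = I ∩ Ici (GapFoot B G)) ∨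
     (∃ δ, IsLeast {β ∈ B | ∀ g ∈ G, g < β} δ ∧
        IsLimitPoint I δ ∧ Cardinal.aleph0 < δ.cof ∧
        G = I ∩ Ico (GapFoot B G) δ)) ∧
    (GapFoot B G ≠ 0 →
      ∃ ν : Ordinal, GapFoot B G = Ordinal.enumOrd I (ν + Ordinal.omega0))

open Ordinal Order

theorem IsUnboundedSet.not_bddAbove {S : Set Ordinal} (hS : IsUnboundedSet S) : ¬ BddAbove S :=
  fun ⟨a, ha⟩ ↦ let ⟨_, hb, hab⟩ := hS a; (ha hb).not_gt hab

theorem IsUnboundedSet.diff_of_bddAbove {I B : Set Ordinal} (hI : IsUnboundedSet I)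
    (hB : BddAbove B) : IsUnboundedSet (I \ B) := by
  obtain ⟨c, hc⟩ := hB
  intro a
  obtain ⟨b, hbI, hb⟩ := hI (max a c)
  exact ⟨b, ⟨hbI, fun hbB ↦ (hc hbB).not_gt ((le_max_right a c).trans_lt hb)⟩,
    (le_max_left a c).trans_lt hb⟩

theorem IsClosedSet.sSup_mem {I S : Set Ordinal} (hI : IsClosedSet I) (hSI : S ⊆ I)
    (hne : S.Nonempty) (hS : BddAbove S) (hmax : ∀ x ∈ S, ∃ y ∈ S, x < y) : sSup S ∈ I := by
  have hlt : ∀ x ∈ S, x < sSup S := fun x hx ↦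
    let ⟨y, hy, hxy⟩ := hmax x hx; hxy.trans_le (le_csSup hS hy)
  obtain ⟨x, hx⟩ := hne
  refine hI _ ⟨zero_le.trans_lt (hlt x hx), le_antisymm ?_ ?_⟩
  · exact csSup_le ⟨x, hSI hx, hlt x hx⟩ fun y hy ↦ hy.2.le
  · exact csSup_le_csSup bddAbove_Iio.inter_of_right ⟨x, hx⟩ fun y hy ↦ ⟨hSI hy, hlt y hy⟩

theorem IsClosedSet.isNormal_enumOrd {I : Set Ordinal} (hI : IsClosedSet I)
    (hunb : ¬ BddAbove I) : IsNormal (enumOrd I) := by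
  have hmono := enumOrd_strictMono hunb
  refine isNormal_iff.2 ⟨hmono, fun a ha b hb ↦ ?_⟩
  set S := enumOrd I '' Iio a
  have hS : BddAbove S := ⟨b, forall_mem_image.2 hb⟩
  have hlt : ∀ c < a, enumOrd I c < sSup S := fun c hc ↦
    (hmono (lt_add_one c)).trans_le (le_csSup hS (mem_image_of_mem _ (ha.add_one_lt hc)))
  have hSI : S ⊆ I := image_subset_iff.2 fun c _ ↦ enumOrd_mem hunb c
  have hmax : ∀ x ∈ S, ∃ y ∈ S, x < y := by
    rintro _ ⟨c, hc, rfl⟩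
    exact ⟨_, mem_image_of_mem _ (ha.add_one_lt hc), hmono (lt_add_one c)⟩
  calc enumOrd I a ≤ sSup S :=
        enumOrd_le_of_forall_lt (hI.sSup_mem hSI (ha.nonempty_Iio.image _) hS hmax) hlt
    _ ≤ b := csSup_le (ha.nonempty_Iio.image _) (forall_mem_image.2 hb)

theorem IsClosedSet.isLimitPoint_enumOrd {I : Set Ordinal} (hI : IsClosedSet I)
    (hunb : ¬ BddAbove I) {a : Ordinal} (ha : IsSuccLimit a) : IsLimitPoint I (enumOrd I a) := by
  have hlub := (hI.isNormal_enumOrd hunb).isLUB_image_Iio_of_isSuccLimit ha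
  have himage : enumOrd I '' Iio a ⊆ I ∩ Iio (enumOrd I a) := by
    rintro _ ⟨c, hc, rfl⟩
    exact ⟨enumOrd_mem hunb c, enumOrd_strictMono hunb hc⟩
  refine ⟨zero_le.trans_lt (enumOrd_strictMono hunb ha.bot_lt), IsLUB.csSup_eq ?_ ?_⟩
  · exact ⟨fun x hx ↦ hx.2.le, fun b hb ↦ hlub.2 fun x hx ↦ hb (himage hx)⟩
  · exact (ha.nonempty_Iio.image _).mono himage

theorem isGap_diff {I B : Set Ordinal} (h : (I \ B).Nonempty) : IsGap I B (I \ B) :=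
  ⟨h, Subset.rfl, fun _ _ _ _ _ hz _ _ ↦ hz, fun _ h₁ h₂ _ ↦ h₂.antisymm h₁⟩

theorem LimitSuitable.exists_eq_inter_Iio_enumOrd {I B : Set Ordinal} (hB : LimitSuitable I B)
    (hI : IsUnboundedSet I) (hne : B.Nonempty) :
    ∃ ν, B = I ∩ Iio (enumOrd I (ν + ω)) := by
  have hBI : B ⊆ I := fun x hx ↦ hB.1.1 (Or.inl hx)
  have : Countable B := (hB.1.2.1.mono subset_union_left).to_subtype
  have hG : IsUnboundedSet (I \ B) := hI.diff_of_bddAbove bddAbove_of_small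
  obtain ⟨hshape, hfoot⟩ := hB.2 _ (isGap_diff (let ⟨b, hb, _⟩ := hG 0; ⟨b, hb⟩))
  set κ := GapFoot B (I \ B)
  have hGeq : I \ B = I ∩ Ici κ := by
    refine hshape.resolve_right ?_ |>.2
    rintro ⟨δ, ⟨⟨-, hδ⟩, -⟩, -⟩
    obtain ⟨b, hb, hδb⟩ := hG δ
    exact (hδ b hb).not_gt hδb
  have hBeq : B = I ∩ Iio κ := calc
    B = I \ (I \ B) := (sdiff_sdiff_cancel_left hBI).symm
    _ = I ∩ Iio κ := by rw [hGeq, sdiff_self_inter, sdiff_eq, compl_Ici]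
  obtain ⟨β, hβ⟩ := hne
  obtain ⟨ν, hν⟩ := hfoot (zero_le.trans_lt (hBeq.subset hβ).2).ne'
  exact ⟨ν, hν ▸ hBeq⟩

/-- If `B` is a nonempty limit suitable subset of `I`, then `sup B ∉ B` (so `B` is not closed),
`sup B = κ_{ν+ω}` for some ordinal `ν`, and `sup B` has cofinality `ω`. -/
theorem stmt6 (I B : Set Ordinal) (hIcl : IsClosedSet I) (hIunb : IsUnboundedSet I)
    (hB : LimitSuitable I B) (hne : B.Nonempty) :
    sSup B ∉ B ∧ (∃ ν : Ordinal, sSup B = Ordinal.enumOrd I (ν + Ordinal.omega0)) ∧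
    (sSup B).cof = Cardinal.aleph0 := by
  have hunb := hIunb.not_bddAbove
  obtain ⟨ν, hBeq⟩ := hB.exists_eq_inter_Iio_enumOrd hIunb hne
  have hlim : IsSuccLimit (ν + ω) := isSuccLimit_add ν isSuccLimit_omega0
  have hsup : sSup B = enumOrd I (ν + ω) := hBeq ▸ (hIcl.isLimitPoint_enumOrd hunb hlim).2
  refine ⟨fun h ↦ (hBeq.subset h).2.ne hsup, ⟨ν, hsup⟩, ?_⟩
  rw [hsup, cof_map_of_isNormal (hIcl.isNormal_enumOrd hunb) hlim, cof_add ν omega0_ne_zero,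
    cof_omega0]
end
end
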